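/- Multi-step policy improvement: let Π be a set of Markov stationary policies in a finite MDP with deterministic transitions, and let π'_H(s) ∈ argmax_{a_{1:H} ∈ A^H} max_{π ∈ Π} Q_π(s, a_{1:H}) be the greedy H-step open-loop policy over the multi-step Q-functions. Then the value function V_{π'_H} (defined as the fixed point value of the H-step Bellman operator under π'_H, evaluated at π'_H(s)) satisfies V_{π'_H}(s) ≥ max_{a_{1:H}} max_{π ∈ Π} Q_π(s, a_{1:H}) ≥ max_a max_{π ∈ Π} Q_π(s, a) for all states s. -/

import Mathlib

/-!
Write `G s a₁..a_H = max_{π ∈ Π} Q_π(s, a₁..a_H)`. Since `V_π(s') = Q_π(s', b₁..b_H)` for the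
actions `bᵢ` that `π` itself plays from `s'`, greediness gives `V_π(s') ≤ G s' (π'_H s')`, so `G`
is a subsolution of the `H`-step Bellman equation of `π'_H`. Subtracting the fixed point,
`D = G - Q` satisfies `D(s, a) ≤ γ^H D(s', π'_H s')`; a function bounded above with this property
is `≤ 0` because `γ^H < 1`. The second inequality holds because `Q_π(s, a)` is the `H`-step
`Q_π` of `a` followed by the first `H - 1` actions of `π`.
-/

/-- Deterministic rollout of an `H`-step action sequence from state `s`. -/
def openRoll {S A : Type*} {H : ℕ} (f : S → A → S) (as : Fin H → A) (s : S) : ℕ → S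
  | 0 => s
  | n + 1 => if h : n < H then f (openRoll f as s n) (as ⟨n, h⟩) else openRoll f as s n

/-- Trajectory of a deterministic Markov stationary policy `π`. -/
def polTraj {S A : Type*} (f : S → A → S) (π : S → A) (s : S) : ℕ → S
  | 0 => s
  | n + 1 => f (polTraj f π s n) (π (polTraj f π s n))

/-- Value function of a deterministic stationary policy `π`. -/
noncomputable def polValue {S A : Type*} (f : S → A → S) (r : S → A → ℝ) (γ : ℝ)
    (π : S → A) (s : S) : ℝ :=
  ∑' n : ℕ, γ ^ n * r (polTraj f π s n) (π (polTraj f π s n))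

/-- Multi-step Q-function of policy `π`: execute `a_{1:H}` from `s`, then follow `π`. -/
noncomputable def qMulti {S A : Type*} {H : ℕ} (f : S → A → S) (r : S → A → ℝ)
    (γ : ℝ) (π : S → A) (s : S) (as : Fin H → A) : ℝ :=
  (∑ h : Fin H, γ ^ (h : ℕ) * r (openRoll f as s h) (as h)) +
    γ ^ H * polValue f r γ π (openRoll f as s H)

/-- One-step Q-function of policy `π`. -/
noncomputable def qOne {S A : Type*} (f : S → A → S) (r : S → A → ℝ) (γ : ℝ)
    (π : S → A) (s : S) (a : A) : ℝ :=
  r s a + γ * polValue f r γ π (f s a)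

/-- The H-step open-loop Bellman operator for open-loop policy `π' : S → A^H`. -/
noncomputable def openBellman {S A : Type*} {H : ℕ} (f : S → A → S) (r : S → A → ℝ)
    (γ : ℝ) (π' : S → Fin H → A) (Q : S → (Fin H → A) → ℝ) :
    S → (Fin H → A) → ℝ :=
  fun s as =>
    (∑ h : Fin H, γ ^ (h : ℕ) * r (openRoll f as s h) (as h)) +
      γ ^ H * Q (openRoll f as s H) (π' (openRoll f as s H))

open Finset

def polActions {S A : Type*} (f : S → A → S) (π : S → A) (s : S) (H : ℕ) : Fin H → A :=
  fun h => π (polTraj f π s h)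

noncomputable def qMultiMax {S A : Type*} {H : ℕ} (f : S → A → S) (r : S → A → ℝ) (γ : ℝ)
    (Pi : Finset (S → A)) (hPi : Pi.Nonempty) (s : S) (as : Fin H → A) : ℝ :=
  Pi.sup' hPi fun π => qMulti f r γ π s as

section Rollouts

variable {S A : Type*} (f : S → A → S)

theorem polTraj_succ' (π : S → A) (s : S) (n : ℕ) :
    polTraj f π s (n + 1) = polTraj f π (f s (π s)) n := by
  induction n with
  | zero => rfl
  | succ n ih => rw [polTraj, ih]; rfl

theorem openRoll_polActions (π : S → A) (s : S) {H n : ℕ} (hn : n ≤ H) :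
    openRoll f (polActions f π s H) s n = polTraj f π s n := by
  induction n with
  | zero => rfl
  | succ n ih => rw [openRoll, dif_pos (by omega : n < H), ih (by omega)]; rfl

theorem openRoll_cons (s : S) (a : A) {K n : ℕ} (tail : Fin K → A) (hn : n ≤ K) :
    openRoll f (Fin.cons a tail : Fin (K + 1) → A) s (n + 1) = openRoll f tail (f s a) n := by
  induction n with
  | zero => rfl
  | succ n ih =>
    rw [openRoll, dif_pos (by omega : n + 1 < K + 1), ih (by omega), openRoll,
      dif_pos (by omega : n < K)]
    rfl

end Rollouts

section Values

variable {S A : Type*} (f : S → A → S) (r : S → A → ℝ) (π : S → A) {γ Rmax : ℝ}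

theorem norm_discounted_reward_le (hγ0 : 0 ≤ γ) (hr : ∀ s a, |r s a| ≤ Rmax) (n : ℕ)
    (s : S) (a : A) : ‖γ ^ n * r s a‖ ≤ Rmax * γ ^ n := by
  rw [Real.norm_eq_abs, abs_mul, abs_pow, abs_of_nonneg hγ0, mul_comm]
  exact mul_le_mul_of_nonneg_right (hr s a) (pow_nonneg hγ0 n)

theorem summable_discounted_rewards (hγ0 : 0 ≤ γ) (hγ1 : γ < 1)
    (hr : ∀ s a, |r s a| ≤ Rmax) (s : S) :
    Summable fun n => γ ^ n * r (polTraj f π s n) (π (polTraj f π s n)) :=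
  .of_norm_bounded ((summable_geometric_of_lt_one hγ0 hγ1).mul_left Rmax)
    fun n => norm_discounted_reward_le r hγ0 hr n _ _

theorem abs_polValue_le (hγ0 : 0 ≤ γ) (hγ1 : γ < 1) (hr : ∀ s a, |r s a| ≤ Rmax) (s : S) :
    |polValue f r γ π s| ≤ Rmax / (1 - γ) :=
  tsum_of_norm_bounded ((hasSum_geometric_of_lt_one hγ0 hγ1).mul_left Rmax)
    fun n => norm_discounted_reward_le r hγ0 hr n _ _

theorem polValue_eq_add (hγ0 : 0 ≤ γ) (hγ1 : γ < 1) (hr : ∀ s a, |r s a| ≤ Rmax) (s : S) :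
    polValue f r γ π s = r s (π s) + γ * polValue f r γ π (f s (π s)) := by
  rw [polValue, (summable_discounted_rewards f r π hγ0 hγ1 hr s).tsum_eq_zero_add, polValue,
    ← tsum_mul_left]
  simp only [polTraj_succ', pow_succ]
  congr 1
  · simp [polTraj]
  · exact tsum_congr fun n => by ring

theorem polValue_eq_sum_add (hγ0 : 0 ≤ γ) (hγ1 : γ < 1) (hr : ∀ s a, |r s a| ≤ Rmax)
    (K : ℕ) (s : S) :
    polValue f r γ π s =
      (∑ h : Fin K, γ ^ (h : ℕ) * r (polTraj f π s h) (π (polTraj f π s h))) +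
        γ ^ K * polValue f r γ π (polTraj f π s K) := by
  induction K with
  | zero => simp [polTraj]
  | succ K ih =>
    rw [ih, polValue_eq_add f r π hγ0 hγ1 hr (polTraj f π s K), Fin.sum_univ_castSucc,
      polTraj]
    simp only [Fin.val_castSucc, Fin.val_last]
    ring

theorem qMulti_polActions (hγ0 : 0 ≤ γ) (hγ1 : γ < 1) (hr : ∀ s a, |r s a| ≤ Rmax)
    (H : ℕ) (s : S) : qMulti f r γ π s (polActions f π s H) = polValue f r γ π s := by
  rw [qMulti, polValue_eq_sum_add f r π hγ0 hγ1 hr H s, openRoll_polActions f π s le_rfl]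
  congr 1
  exact sum_congr rfl fun h _ => by rw [openRoll_polActions f π s h.isLt.le]; rfl

theorem qOne_eq_qMulti_cons (hγ0 : 0 ≤ γ) (hγ1 : γ < 1) (hr : ∀ s a, |r s a| ≤ Rmax)
    (K : ℕ) (s : S) (a : A) :
    qOne f r γ π s a = qMulti f r γ π s (Fin.cons a (polActions f π (f s a) K)) := by
  rw [qOne, qMulti, Fin.sum_univ_succ, openRoll_cons f s a _ le_rfl,
    openRoll_polActions f π _ le_rfl, polValue_eq_sum_add f r π hγ0 hγ1 hr K (f s a)]
  simp only [Fin.val_succ, Fin.val_zero, pow_zero, one_mul, Fin.cons_zero, Fin.cons_succ,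
    fun i : Fin K => openRoll_cons f s a (polActions f π (f s a) K) i.isLt.le,
    fun i : Fin K => openRoll_polActions f π (f s a) i.isLt.le, pow_succ', mul_assoc]
  rw [openRoll, mul_add, mul_sum]
  simp only [polActions]
  ring

theorem qMulti_le (hγ0 : 0 ≤ γ) (hγ1 : γ < 1) (hr : ∀ s a, |r s a| ≤ Rmax) {H : ℕ}
    (s : S) (as : Fin H → A) : qMulti f r γ π s as ≤ H * Rmax + Rmax / (1 - γ) := by
  have hγpow (n : ℕ) : γ ^ n ≤ 1 := pow_le_one₀ hγ0 hγ1.le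
  have hsum : ∑ h : Fin H, γ ^ (h : ℕ) * r (openRoll f as s h) (as h) ≤ H * Rmax :=
    calc _ ≤ ∑ _h : Fin H, Rmax := sum_le_sum fun h _ =>
            (le_abs_self _).trans <| (norm_discounted_reward_le r hγ0 hr h _ _).trans <|
              mul_le_of_le_one_right ((abs_nonneg _).trans (hr (openRoll f as s h) (as h))) (hγpow h)
      _ = H * Rmax := by simp
  have htail : γ ^ H * polValue f r γ π (openRoll f as s H) ≤ Rmax / (1 - γ) :=
    (le_abs_self _).trans <| by
      rw [abs_mul, abs_of_nonneg (pow_nonneg hγ0 H)]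
      exact (mul_le_of_le_one_left (abs_nonneg _) (hγpow H)).trans
        (abs_polValue_le f r π hγ0 hγ1 hr _)
  exact add_le_add hsum htail

end Values

theorem nonpos_of_forall_le_mul_of_bddAbove {X : Type*} {D : X → ℝ} {c B : ℝ} (hc0 : 0 ≤ c)
    (hc1 : c < 1) (hB : ∀ x, D x ≤ B) (hD : ∀ x, ∃ y, D x ≤ c * D y) (x : X) : D x ≤ 0 := by
  have hpow (n : ℕ) : ∀ x, D x ≤ c ^ n * B := by
    induction n with
    | zero => simpa using hB
    | succ n ih =>
      intro x
      obtain ⟨y, hy⟩ := hD x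
      calc D x ≤ c * (c ^ n * B) := hy.trans (mul_le_mul_of_nonneg_left (ih y) hc0)
        _ = c ^ (n + 1) * B := by ring
  have hlim := (tendsto_pow_atTop_nhds_zero_of_lt_one hc0 hc1).mul_const B
  rw [zero_mul] at hlim
  exact ge_of_tendsto' hlim fun n => hpow n x

section OpenLoop

variable {S A : Type*} {H : ℕ} (f : S → A → S) (r : S → A → ℝ) {γ : ℝ}

theorem le_of_le_openBellman (π' : S → Fin H → A) (hγ0 : 0 ≤ γ) (hγH : γ ^ H < 1)
    {G Q : S → (Fin H → A) → ℝ} (hG : ∀ s as, G s as ≤ openBellman f r γ π' G s as)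
    (hQ : ∀ s as, Q s as = openBellman f r γ π' Q s as)
    (hGQ : ∃ B, ∀ s as, G s as - Q s as ≤ B) (s : S) (as : Fin H → A) : G s as ≤ Q s as := by
  obtain ⟨B, hB⟩ := hGQ
  have hstep (p : S × (Fin H → A)) : ∃ q : S × (Fin H → A),
      G p.1 p.2 - Q p.1 p.2 ≤ γ ^ H * (G q.1 q.2 - Q q.1 q.2) := by
    refine ⟨(openRoll f p.2 p.1 H, π' (openRoll f p.2 p.1 H)), ?_⟩
    have := hG p.1 p.2
    rw [hQ p.1 p.2]
    simp only [openBellman] at this ⊢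
    linarith
  have := nonpos_of_forall_le_mul_of_bddAbove (pow_nonneg hγ0 H) hγH (fun p => hB p.1 p.2)
    hstep (s, as)
  linarith

theorem qMultiMax_le_openBellman (Pi : Finset (S → A)) (hPi : Pi.Nonempty)
    (πH' : S → Fin H → A) (hγ0 : 0 ≤ γ) (hγ1 : γ < 1) {Rmax : ℝ}
    (hr : ∀ s a, |r s a| ≤ Rmax)
    (hgreedy : ∀ s (as : Fin H → A), qMultiMax f r γ Pi hPi s as ≤ qMultiMax f r γ Pi hPi s (πH' s))
    (s : S) (as : Fin H → A) :
    qMultiMax f r γ Pi hPi s as ≤ openBellman f r γ πH' (qMultiMax f r γ Pi hPi) s as := by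
  refine sup'_le _ _ fun π hπ => add_le_add_right (mul_le_mul_of_nonneg_left ?_
    (pow_nonneg hγ0 H)) _
  set t := openRoll f as s H
  calc polValue f r γ π t = qMulti f r γ π t (polActions f π t H) :=
        (qMulti_polActions f r π hγ0 hγ1 hr H t).symm
    _ ≤ qMultiMax f r γ Pi hPi t (polActions f π t H) :=
        le_sup' (fun π' => qMulti f r γ π' t (polActions f π t H)) hπ
    _ ≤ qMultiMax f r γ Pi hPi t (πH' t) := hgreedy t _

end OpenLoop

/-- multi-step policy improvement, Theorem 2 of the paper: in a
deterministic finite MDP, if `πH'` is the greedy H-step open-loop policy over the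
multi-step Q-functions of a finite nonempty class `Π` of stationary policies, and
`Qfix` is the (bounded) fixed point of the corresponding H-step open-loop Bellman
operator, then the value `V_{πH'}(s) = Qfix s (πH' s)` dominates
`max_{a_{1:H}} max_{π ∈ Π} Q_π(s, a_{1:H})`, which in turn dominates
`max_a max_{π ∈ Π} Q_π(s, a)`. -/
theorem multi_step_policy_improvement
    {S A : Type*} [Fintype A] [Nonempty A]
    (f : S → A → S) (r : S → A → ℝ) (γ : ℝ) (hγ0 : 0 ≤ γ) (hγ1 : γ < 1)
    (Rmax : ℝ) (hr : ∀ s a, |r s a| ≤ Rmax)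
    (H : ℕ) (hH : 1 ≤ H)
    (Pi : Finset (S → A)) (hPi : Pi.Nonempty)
    (πH' : S → Fin H → A)
    (hgreedy : ∀ s : S, ∀ as : Fin H → A,
      Pi.sup' hPi (fun π => qMulti f r γ π s as) ≤
        Pi.sup' hPi (fun π => qMulti f r γ π s (πH' s)))
    (Qfix : S → (Fin H → A) → ℝ)
    (hQfixBdd : ∃ C, ∀ s as, |Qfix s as| ≤ C)
    (hQfix : ∀ s as, Qfix s as = openBellman f r γ πH' Qfix s as) :
    ∀ s : S,
      ((Finset.univ : Finset (Fin H → A)).sup' Finset.univ_nonempty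
          (fun as => Pi.sup' hPi fun π => qMulti f r γ π s as) ≤
        Qfix s (πH' s)) ∧
      ((Finset.univ : Finset A).sup' Finset.univ_nonempty
          (fun a => Pi.sup' hPi fun π => qOne f r γ π s a) ≤
        (Finset.univ : Finset (Fin H → A)).sup' Finset.univ_nonempty
          (fun as => Pi.sup' hPi fun π => qMulti f r γ π s as)) := by
  intro s
  have hbdd : ∃ B, ∀ t as, qMultiMax f r γ Pi hPi t as - Qfix t as ≤ B := by
    obtain ⟨C, hC⟩ := hQfixBdd
    refine ⟨H * Rmax + Rmax / (1 - γ) + C, fun t as => ?_⟩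
    have hmax : qMultiMax f r γ Pi hPi t as ≤ H * Rmax + Rmax / (1 - γ) :=
      sup'_le _ _ fun π _ => qMulti_le f r π hγ0 hγ1 hr t as
    linarith [(abs_le.mp (hC t as)).1]
  have hdom := le_of_le_openBellman f r πH' hγ0 (pow_lt_one₀ hγ0 hγ1 (by omega)) 
    (qMultiMax_le_openBellman f r Pi hPi πH' hγ0 hγ1 hr hgreedy) hQfix hbdd
  refine ⟨sup'_le _ _ fun as _ => (hgreedy s as).trans (hdom s (πH' s)),
    sup'_le _ _ fun a _ => sup'_le _ _ fun π hπ => ?_⟩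
  obtain ⟨K, rfl⟩ := Nat.exists_eq_add_of_le' hH
  rw [qOne_eq_qMulti_cons f r π hγ0 hγ1 hr K s a]
  exact le_sup'_of_le _ (mem_univ _) (le_sup' (fun π => qMulti f r γ π s _) hπ)
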